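/- arXiv:1810.10229 — 4 statements merged into one kernel-verified Lean document; each statement's English description precedes it below -/
import Mathlib

section
/- Let G be a connected finite simple graph with nonnegative edge weights w, let S ⊆ V be nonempty, let v be a vertex, and let C be a cycle of G passing through v with w(C) < 2 · dist_G(v, S). Then every vertex of C lies in the ball B_S(v) = { u ∈ V : dist_G(v, u) < dist_G(v, S) }. -/
/-!
A vertex `u` of the cycle splits it into two walks from `v` to `u` whose weights add up to
`w(C)`, so `2 · dist(v, u) ≤ w(C) < 2 · dist(v, S)`.
-/

/-- The weight of a walk: the sum of the weights of its edges (with multiplicity). -/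
noncomputable def walkWeight {V : Type*} {G : SimpleGraph V} (w : Sym2 V → ℝ) {u v : V}
    (p : G.Walk u v) : ℝ := (p.edges.map w).sum

/-- The weighted distance between two vertices: the infimum of the weights of paths
between them. -/
noncomputable def gdist {V : Type*} (G : SimpleGraph V) (w : Sym2 V → ℝ) (u v : V) : ℝ :=
  sInf {x : ℝ | ∃ p : G.Walk u v, p.IsPath ∧ walkWeight w p = x}

/-- The weighted distance from a vertex to a set of vertices. -/
noncomputable def gdistS {V : Type*} (G : SimpleGraph V) (w : Sym2 V → ℝ) (v : V)
    (S : Set V) : ℝ :=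
  sInf {x : ℝ | ∃ s ∈ S, gdist G w v s = x}

section WalkWeight

variable {V : Type*} {G : SimpleGraph V} (w : Sym2 V → ℝ)

lemma walkWeight_append {u v x : V} (p : G.Walk u v) (q : G.Walk v x) :
    walkWeight w (p.append q) = walkWeight w p + walkWeight w q := by
  simp only [walkWeight, SimpleGraph.Walk.edges_append, List.map_append, List.sum_append]

lemma walkWeight_reverse {u v : V} (p : G.Walk u v) :
    walkWeight w p.reverse = walkWeight w p := by
  simp only [walkWeight, SimpleGraph.Walk.edges_reverse, List.map_reverse, List.sum_reverse]

variable {w}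

lemma walkWeight_nonneg (hw : ∀ e ∈ G.edgeSet, 0 ≤ w e) {u v : V} (p : G.Walk u v) :
    0 ≤ walkWeight w p :=
  List.sum_nonneg <| by simpa using fun e he => hw e (p.edges_subset_edgeSet he)

lemma walkWeight_le_of_subperm (hw : ∀ e ∈ G.edgeSet, 0 ≤ w e) {u v x y : V}
    {p : G.Walk u v} {q : G.Walk x y} (h : q.edges.Subperm p.edges) :
    walkWeight w q ≤ walkWeight w p := by
  obtain ⟨l, hperm, hsub⟩ := h
  rw [walkWeight, walkWeight, ← (hperm.map w).sum_eq]
  exact (hsub.map w).sum_le_sum (by simpa using fun e he => hw e (p.edges_subset_edgeSet he))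

lemma walkWeight_bypass_le [DecidableEq V] (hw : ∀ e ∈ G.edgeSet, 0 ≤ w e) {u v : V}
    (p : G.Walk u v) : walkWeight w p.bypass ≤ walkWeight w p :=
  walkWeight_le_of_subperm hw <| p.bypass_isPath.edges_nodup.subperm p.edges_bypass_subset_edges

lemma gdist_le_walkWeight (hw : ∀ e ∈ G.edgeSet, 0 ≤ w e) {u v : V} (p : G.Walk u v) :
    gdist G w u v ≤ walkWeight w p := by
  classical
  have hbdd : BddBelow {x : ℝ | ∃ q : G.Walk u v, q.IsPath ∧ walkWeight w q = x} :=
    ⟨0, by rintro _ ⟨q, -, rfl⟩; exact walkWeight_nonneg hw q⟩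
  exact (csInf_le hbdd ⟨p.bypass, p.bypass_isPath, rfl⟩).trans (walkWeight_bypass_le hw p)

lemma two_mul_gdist_le_walkWeight_of_mem_support (hw : ∀ e ∈ G.edgeSet, 0 ≤ w e)
    {v u : V} (C : G.Walk v v) (hu : u ∈ C.support) :
    2 * gdist G w v u ≤ walkWeight w C := by
  classical
  have hsplit : walkWeight w (C.takeUntil u hu) + walkWeight w (C.dropUntil u hu).reverse
      = walkWeight w C := by
    rw [walkWeight_reverse, ← walkWeight_append, C.take_spec hu]
  linarith [gdist_le_walkWeight hw (C.takeUntil u hu),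
    gdist_le_walkWeight hw (C.dropUntil u hu).reverse]

end WalkWeight

theorem stmt4_general {V : Type*} (G : SimpleGraph V)
    (w : Sym2 V → ℝ) (hw : ∀ e ∈ G.edgeSet, 0 ≤ w e)
    (S : Set V) (v : V)
    (C : G.Walk v v)
    (hlt : walkWeight w C < 2 * gdistS G w v S) :
    ∀ u ∈ C.support, gdist G w v u < gdistS G w v S := fun u hu => by
  linarith [two_mul_gdist_le_walkWeight_of_mem_support hw C hu]

/-- In a connected finite simple graph with nonnegative edge weights, if a cycle `C` passes
through `v` and `w(C) < 2 · dist_G(v, S)` for a nonempty set `S` of vertices, then every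
vertex of `C` lies in the open ball `B_S(v) = { u : dist_G(v, u) < dist_G(v, S) }`. -/
theorem stmt4 {V : Type*} [Fintype V] (G : SimpleGraph V) (hG : G.Connected)
    (w : Sym2 V → ℝ) (hw : ∀ e ∈ G.edgeSet, 0 ≤ w e)
    (S : Set V) (hS : S.Nonempty) (v : V)
    (C : G.Walk v v) (hC : C.IsCycle)
    (hlt : walkWeight w C < 2 * gdistS G w v S) :
    ∀ u ∈ C.support, gdist G w v u < gdistS G w v S :=
  stmt4_general G w hw S v C hlt
end

section
/- Let G = (V, E) be a finite simple graph with nonnegative edge weights w, let E₀ = { e ∈ E : w_e = 0 }, and suppose the spanning subgraph (V, E₀) is a forest. Let A and B be two distinct connected components of (V, E₀), and let e and e' be two distinct edges of G, each having one endpoint in A and the other endpoint in B. Then G contains a cycle of weight exactly w_e + w_{e'}. -/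
namespace SimpleGraph

variable {V : Type*}

section walkWeight

variable {G : SimpleGraph V} (w : Sym2 V → ℝ)

@[simp]
lemma walkWeight_cons {u v x : V} (h : G.Adj u v) (p : G.Walk v x) :
    walkWeight w (Walk.cons h p) = w s(u, v) + walkWeight w p := by
  simp [walkWeight]

@[simp]
lemma walkWeight_append {u v x : V} (p : G.Walk u v) (q : G.Walk v x) :
    walkWeight w (p.append q) = walkWeight w p + walkWeight w q := by
  simp [walkWeight]

@[simp]
lemma walkWeight_mapLe {G' : SimpleGraph V} (hle : G ≤ G') {u v : V} (p : G.Walk u v) :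
    walkWeight w (p.mapLe hle) = walkWeight w p := by
  rw [walkWeight, walkWeight, Walk.edges_mapLe_eq_edges]

lemma walkWeight_eq_zero_of_forall_mem_edgeSet (hG : ∀ e ∈ G.edgeSet, w e = 0) {u v : V}
    (p : G.Walk u v) : walkWeight w p = 0 :=
  List.sum_eq_zero <| by
    simpa using fun e he => hG e (p.edges_subset_edgeSet he)

end walkWeight

variable {G : SimpleGraph V}

lemma Walk.IsPath.isCycle_cons_append_cons {a b a' b' : V} {p : G.Walk a' a} {q : G.Walk b b'}
    (hp : p.IsPath) (hq : q.IsPath) (hdisj : q.support.Disjoint p.support)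
    (hab : G.Adj a b) (ha'b' : G.Adj a' b') (hne : s(a, b) ≠ s(a', b')) :
    (Walk.cons hab (q.append (Walk.cons ha'b'.symm p))).IsCycle := by
  rw [Walk.cons_isCycle_iff]
  constructor
  · rw [Walk.isPath_def, Walk.support_append, Walk.support_cons, List.tail_cons]
    exact List.nodup_append.2 ⟨hq.support_nodup, hp.support_nodup,
      fun x hxq y hxp hxy => hdisj hxq (hxy ▸ hxp)⟩
  · have ha : a ∉ q.support := fun h => hdisj h p.end_mem_support
    have hb : b ∉ p.support := fun h => hdisj q.start_mem_support h
    simp only [Walk.edges_append, Walk.edges_cons, List.mem_append, List.mem_cons, not_or]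
    exact ⟨fun h => ha (q.fst_mem_support_of_mem_edges h), fun h => hne (h.trans Sym2.eq_swap),
      fun h => hb (p.snd_mem_support_of_mem_edges h)⟩

theorem exists_isCycle_walkWeight_eq_of_le {H : SimpleGraph V} (hle : H ≤ G) (w : Sym2 V → ℝ)
    (hH : ∀ e ∈ H.edgeSet, w e = 0) {a b a' b' : V} (hab : G.Adj a b) (ha'b' : G.Adj a' b')
    (hne : s(a, b) ≠ s(a', b')) (haa' : H.Reachable a' a) (hbb' : H.Reachable b b')
    (hsep : ¬ H.Reachable a b) :
    ∃ (x : V) (C : G.Walk x x), C.IsCycle ∧ walkWeight w C = w s(a, b) + w s(a', b') := by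
  classical
  obtain ⟨p, hp⟩ := haa'.exists_isPath
  obtain ⟨q, hq⟩ := hbb'.exists_isPath
  have hdisj : q.support.Disjoint p.support := fun x hxq hxp =>
    hsep ((p.reverse.takeUntil x (by simpa using hxp)).reachable.trans
      (q.takeUntil x hxq).reachable.symm)
  refine ⟨a, _, (hp.mapLe hle).isCycle_cons_append_cons (hq.mapLe hle)
    (by simpa using hdisj) hab ha'b' hne, ?_⟩
  simp only [walkWeight_cons, walkWeight_append, walkWeight_mapLe,
    walkWeight_eq_zero_of_forall_mem_edgeSet w hH, Sym2.eq_swap (a := b')]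
  ring

end SimpleGraph

theorem stmt11_general {V : Type*} (G : SimpleGraph V) (w : Sym2 V → ℝ)
    (A B : (G.deleteEdges {e : Sym2 V | w e ≠ 0}).ConnectedComponent) (hAB : A ≠ B)
    (a b a' b' : V) (hab : G.Adj a b) (hab' : G.Adj a' b')
    (ha : (G.deleteEdges {e : Sym2 V | w e ≠ 0}).connectedComponentMk a = A)
    (hb : (G.deleteEdges {e : Sym2 V | w e ≠ 0}).connectedComponentMk b = B)
    (ha' : (G.deleteEdges {e : Sym2 V | w e ≠ 0}).connectedComponentMk a' = A)
    (hb' : (G.deleteEdges {e : Sym2 V | w e ≠ 0}).connectedComponentMk b' = B)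
    (hne : s(a, b) ≠ s(a', b')) :
    ∃ (x : V) (C : G.Walk x x), C.IsCycle ∧
      walkWeight w C = w s(a, b) + w s(a', b') := by
  have hzero : ∀ e ∈ (G.deleteEdges {e : Sym2 V | w e ≠ 0}).edgeSet, w e = 0 := by
    intro e he
    rw [SimpleGraph.edgeSet_deleteEdges] at he
    simpa using he.2
  refine SimpleGraph.exists_isCycle_walkWeight_eq_of_le (SimpleGraph.deleteEdges_le _) w hzero
    hab hab' hne (SimpleGraph.ConnectedComponent.exact (ha'.trans ha.symm))
    (SimpleGraph.ConnectedComponent.exact (hb.trans hb'.symm)) fun hr => hAB ?_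
  rw [← ha, ← hb]
  exact SimpleGraph.ConnectedComponent.sound hr

/-- Let `G` be a finite simple graph with nonnegative edge weights whose weight-`0` edges
form a forest. If `A ≠ B` are two connected components of that forest and `s(a, b) ≠ s(a', b')`
are two edges of `G` with `a, a' ∈ A` and `b, b' ∈ B`, then `G` contains a cycle of weight
exactly `w(s(a, b)) + w(s(a', b'))`. -/
theorem stmt11 {V : Type*} [Fintype V] (G : SimpleGraph V) (w : Sym2 V → ℝ)
    (hw : ∀ e ∈ G.edgeSet, 0 ≤ w e)
    (hforest : (G.deleteEdges {e : Sym2 V | w e ≠ 0}).IsAcyclic)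
    (A B : (G.deleteEdges {e : Sym2 V | w e ≠ 0}).ConnectedComponent) (hAB : A ≠ B)
    (a b a' b' : V) (hab : G.Adj a b) (hab' : G.Adj a' b')
    (ha : (G.deleteEdges {e : Sym2 V | w e ≠ 0}).connectedComponentMk a = A)
    (hb : (G.deleteEdges {e : Sym2 V | w e ≠ 0}).connectedComponentMk b = B)
    (ha' : (G.deleteEdges {e : Sym2 V | w e ≠ 0}).connectedComponentMk a' = A)
    (hb' : (G.deleteEdges {e : Sym2 V | w e ≠ 0}).connectedComponentMk b' = B)
    (hne : s(a, b) ≠ s(a', b')) :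
    ∃ (x : V) (C : G.Walk x x), C.IsCycle ∧
      walkWeight w C = w s(a, b) + w s(a', b') :=
  stmt11_general G w A B hAB a b a' b' hab hab' ha hb ha' hb' hne
end

section
/- Let 𝓕 be a family of N ≥ 1 sets, each of size r ≥ 1, over a finite universe U with |U| = u. Then there exists a subset H ⊆ U with |H| ≤ (u/r) · ln N + 1 that intersects every member of 𝓕. -/
/-!
Greedy hitting set. Counting incidences, some point of `U` lies in at least an `r / u` fraction
of the `N` sets. Adding it to `H` and recursing on the sets it misses leaves at most
`N (1 - r/u) ≤ N exp (-r/u)` of them, so each step lowers `ln N` by at least `r/u`; the last step,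
which leaves no set, accounts for the `+ 1`.
-/

section

open Finset Real

variable {α : Type*} [DecidableEq α]

theorem sum_card_filter_mem_eq_sum_card_inter (U : Finset α) (𝓕 : Finset (Finset α)) :
    ∑ x ∈ U, #{F ∈ 𝓕 | x ∈ F} = ∑ F ∈ 𝓕, #(U ∩ F) := by
  simp_rw [← filter_mem_eq_inter, card_eq_sum_ones, sum_filter]
  exact sum_comm

theorem exists_mem_card_mul_le_card_filter_mem_mul {U : Finset α} {𝓕 : Finset (Finset α)}
    {r : ℕ} (hU : U.Nonempty) (hsub : ∀ F ∈ 𝓕, F ⊆ U) (hsize : ∀ F ∈ 𝓕, r ≤ #F) :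
    ∃ x ∈ U, #𝓕 * r ≤ #{F ∈ 𝓕 | x ∈ F} * #U := by
  refine exists_le_of_sum_le hU ?_
  calc ∑ _ ∈ U, #𝓕 * r
      = #U * (#𝓕 * r) := by rw [sum_const, smul_eq_mul]
    _ ≤ #U * ∑ F ∈ 𝓕, #(U ∩ F) := by
        gcongr
        rw [← smul_eq_mul]
        refine card_nsmul_le_sum 𝓕 _ r fun F hF ↦ ?_
        rw [inter_eq_right.2 (hsub F hF)]
        exact hsize F hF
    _ = ∑ x ∈ U, #{F ∈ 𝓕 | x ∈ F} * #U := by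
        rw [← sum_mul, sum_card_filter_mem_eq_sum_card_inter, mul_comm]

theorem log_le_log_sub_div_of_mul_le {a b r u : ℝ} (ha : 0 < a) (hb : 0 ≤ b) (hu : 0 < u)
    (h : a * u ≤ b * (u - r)) : log a ≤ log b - r / u := by
  have hab : a ≤ b * exp (-(r / u)) :=
    calc a ≤ b * (-(r / u) + 1) := by
          rw [show b * (-(r / u) + 1) = b * (u - r) / u by field_simp; ring, le_div_iff₀ hu]
          exact h
      _ ≤ b * exp (-(r / u)) := mul_le_mul_of_nonneg_left (add_one_le_exp _) hb
  have hb' : 0 < b := pos_of_mul_pos_left (ha.trans_le hab) (exp_pos _).le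
  calc log a ≤ log (b * exp (-(r / u))) := log_le_log ha hab
    _ = log b - r / u := by rw [log_mul hb'.ne' (exp_pos _).ne', log_exp]; ring

theorem log_card_filter_not_mem_le_log_card_sub_div {U : Finset α} {𝓕 : Finset (Finset α)}
    {x : α} {r : ℕ} (hU : U.Nonempty) (h𝓕' : {F ∈ 𝓕 | x ∉ F}.Nonempty)
    (hx : #𝓕 * r ≤ #{F ∈ 𝓕 | x ∈ F} * #U) :
    log #{F ∈ 𝓕 | x ∉ F} ≤ log #𝓕 - r / #U := by
  have hsplit : (#{F ∈ 𝓕 | x ∈ F} : ℝ) + #{F ∈ 𝓕 | x ∉ F} = #𝓕 := by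
    exact_mod_cast card_filter_add_card_filter_not (s := 𝓕) (p := (x ∈ ·))
  have hxR : (#𝓕 : ℝ) * r ≤ #{F ∈ 𝓕 | x ∈ F} * #U := by exact_mod_cast hx
  refine log_le_log_sub_div_of_mul_le (by exact_mod_cast h𝓕'.card_pos) (Nat.cast_nonneg _)
    (by exact_mod_cast hU.card_pos) ?_
  linear_combination hxR + (#U : ℝ) * hsplit

theorem forall_insert_inter_nonempty {x : α} {H : Finset α} {𝓕 : Finset (Finset α)}
    (h : ∀ F ∈ {F ∈ 𝓕 | x ∉ F}, (H ∩ F).Nonempty) : ∀ F ∈ 𝓕, (insert x H ∩ F).Nonempty := by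
  intro F hF
  by_cases hxF : x ∈ F
  · exact ⟨x, mem_inter.2 ⟨mem_insert_self x H, hxF⟩⟩
  · exact (h F (mem_filter.2 ⟨hF, hxF⟩)).mono (inter_subset_inter_right (subset_insert x H))

theorem exists_subset_card_le_log_forall_inter_nonempty (U : Finset α) (𝓕 : Finset (Finset α))
    {r : ℕ} (hr : 0 < r) (hsub : ∀ F ∈ 𝓕, F ⊆ U) (hsize : ∀ F ∈ 𝓕, r ≤ #F) :
    ∃ H ⊆ U, (#H : ℝ) ≤ (#U / r : ℝ) * log #𝓕 + 1 ∧ ∀ F ∈ 𝓕, (H ∩ F).Nonempty := by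
  induction 𝓕 using Finset.strongInduction with
  | H 𝓕 ih =>
  rcases 𝓕.eq_empty_or_nonempty with rfl | ⟨F₀, hF₀⟩
  · exact ⟨∅, empty_subset U, by simp, by simp⟩
  have hU : U.Nonempty := (card_pos.1 (hr.trans_le (hsize F₀ hF₀))).mono (hsub F₀ hF₀)
  obtain ⟨x, hxU, hx⟩ := exists_mem_card_mul_le_card_filter_mem_mul hU hsub hsize
  have hlog : 0 ≤ log #𝓕 := log_nonneg (by exact_mod_cast card_pos.2 ⟨F₀, hF₀⟩)
  suffices ∃ H ⊆ U, (#H : ℝ) + 1 ≤ (#U / r : ℝ) * log #𝓕 + 1 ∧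
      ∀ F ∈ {F ∈ 𝓕 | x ∉ F}, (H ∩ F).Nonempty by
    obtain ⟨H, hHU, hH, hit⟩ := this
    refine ⟨insert x H, insert_subset hxU hHU, ?_, forall_insert_inter_nonempty hit⟩
    exact (Nat.cast_le.2 (card_insert_le x H)).trans (by push_cast; exact hH)
  rcases {F ∈ 𝓕 | x ∉ F}.eq_empty_or_nonempty with h𝓕' | h𝓕'
  · refine ⟨∅, empty_subset U, ?_, by simp [h𝓕']⟩
    simp only [card_empty, CharP.cast_eq_zero, zero_add, le_add_iff_nonneg_left]
    positivity
  have hx𝓕 : {F ∈ 𝓕 | x ∉ F} ⊂ 𝓕 := by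
    obtain ⟨F, hF⟩ : {F ∈ 𝓕 | x ∈ F}.Nonempty := card_pos.1 <|
      Nat.pos_of_mul_pos_right ((Nat.mul_pos (card_pos.2 ⟨F₀, hF₀⟩) hr).trans_le hx)
    exact filter_ssubset.2 ⟨F, (mem_filter.1 hF).1, not_not.2 (mem_filter.1 hF).2⟩
  obtain ⟨H, hHU, hH, hit⟩ := ih _ hx𝓕 (fun F hF ↦ hsub F (filter_subset _ _ hF))
    (fun F hF ↦ hsize F (filter_subset _ _ hF))
  refine ⟨H, hHU, ?_, hit⟩
  have hstep := log_card_filter_not_mem_le_log_card_sub_div hU h𝓕' hx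
  have hrpos : (0 : ℝ) < r := by exact_mod_cast hr
  calc (#H : ℝ) + 1 ≤ (#U / r : ℝ) * log #{F ∈ 𝓕 | x ∉ F} + 1 + 1 := by linarith
    _ ≤ (#U / r : ℝ) * (log #𝓕 - r / #U) + 1 + 1 := by gcongr
    _ = (#U / r : ℝ) * log #𝓕 + 1 := by field_simp; ring

end

theorem stmt12_general {α : Type*} [DecidableEq α] (U : Finset α) (𝓕 : Finset (Finset α))
    (N r u : ℕ) (hNcard : 𝓕.card = N)
    (hr : 1 ≤ r) (hu : U.card = u)
    (hsub : ∀ F ∈ 𝓕, F ⊆ U) (hsize : ∀ F ∈ 𝓕, F.card = r) :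
    ∃ H ⊆ U, (H.card : ℝ) ≤ (u / r : ℝ) * Real.log N + 1 ∧
      ∀ F ∈ 𝓕, (H ∩ F).Nonempty := by
  subst hNcard hu
  exact exists_subset_card_le_log_forall_inter_nonempty U 𝓕 hr hsub fun F hF ↦ (hsize F hF).ge

/-- Given a family `𝓕` of `N ≥ 1` sets, each of size `r ≥ 1`, over a finite universe `U` of
cardinality `u`, there exists a subset `H ⊆ U` of size at most `(u / r) · ln N + 1` that
intersects every member of `𝓕`. -/
theorem stmt12 {α : Type*} [DecidableEq α] (U : Finset α) (𝓕 : Finset (Finset α))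
    (N r u : ℕ) (hN : 1 ≤ N) (hNcard : 𝓕.card = N)
    (hr : 1 ≤ r) (hru : r ≤ u) (hu : U.card = u)
    (hsub : ∀ F ∈ 𝓕, F ⊆ U) (hsize : ∀ F ∈ 𝓕, F.card = r) :
    ∃ H ⊆ U, (H.card : ℝ) ≤ (u / r : ℝ) * Real.log N + 1 ∧
      ∀ F ∈ 𝓕, (H ∩ F).Nonempty :=
  stmt12_general U 𝓕 N r u hNcard hr hu hsub hsize
end

section
/- Let G be a connected finite simple graph on n ≥ 2 vertices with nonnegative edge weights w, and let r be an integer with 1 ≤ r ≤ n. Then there exists a nonempty set S ⊆ V with |S| ≤ (n/r) · ln n + 1 such that for every vertex v, the ball B_S(v) = { u ∈ V : dist_G(v, u) < dist_G(v, S) } has at most r elements. -/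
/-!
Greedy hitting set. Let `A v` be the set of vertices having fewer than `r` vertices strictly
closer to `v`; it has at least `r` elements. If a set `S` meets every `A v`, say in `s`, then
`dist(v, S) ≤ dist(v, s)`, so the ball `B_S(v)` lies inside the fewer than `r` vertices strictly
closer to `v` than `s`. Each `A v` covers an `r / n` fraction of the `n` vertices, so by double
counting some vertex lies in an `r / n` fraction of the sets `A v` not yet met; choosing it
leaves at most a `1 - r / n` fraction of them unmet. After `k > (n / r) ln n` choices fewer than
`n (1 - r / n) ^ k ≤ n e ^ (-k r / n) < 1` sets remain unmet.
-/

open Finset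

section NearSet

variable {V α : Type*} [Fintype V] [LinearOrder α]

def nearSet (d : V → α) (r : ℕ) : Finset V :=
  {s | #{u | d u < d s} < r}

theorem le_card_nearSet (d : V → α) {r : ℕ} (hr : r ≤ Fintype.card V) :
    r ≤ #(nearSet d r) := by
  classical
  by_cases hfull : nearSet d r = univ
  · rwa [hfull, card_univ]
  obtain ⟨s, hs, hmin⟩ := (nearSet d r)ᶜ.exists_min_image d
    (by simpa [← compl_eq_empty_iff, nonempty_iff_ne_empty] using hfull)
  have hcloser : ({u | d u < d s} : Finset V) ⊆ nearSet d r := fun u hu => by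
    by_contra hu'
    exact (mem_filter.mp hu).2.not_ge (hmin u (mem_compl.mpr hu'))
  calc r ≤ #{u | d u < d s} := by simpa [nearSet] using hs
    _ ≤ #(nearSet d r) := card_le_card hcloser

theorem ncard_setOf_lt_lt_of_mem_nearSet {d : V → α} {r : ℕ} {s : V} (hs : s ∈ nearSet d r)
    {t : α} (ht : t ≤ d s) : {u | d u < t}.ncard < r := by
  calc {u | d u < t}.ncard ≤ ({u | d u < d s} : Finset V).card := by
        rw [← Set.ncard_coe_finset]
        exact Set.ncard_le_ncard (fun u hu => by simpa using lt_of_lt_of_le hu ht)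
    _ < r := (mem_filter.mp hs).2

end NearSet

theorem natCast_mul_one_sub_div_pow_lt_one (m : ℕ) {n r : ℝ} (hr : 0 < r) (hrn : r ≤ n)
    {k : ℕ} (hk : n / r * Real.log m < k) : m * (1 - r / n) ^ k < 1 := by
  rcases Nat.eq_zero_or_pos m with rfl | hm
  · simp
  have hn : 0 < n := hr.trans_le hrn
  have hm' : (0 : ℝ) < m := by exact_mod_cast hm
  have hlog : Real.log m < k * (r / n) := by
    calc Real.log m = n / r * Real.log m * (r / n) := by field_simp
      _ < k * (r / n) := by gcongr
  calc (m : ℝ) * (1 - r / n) ^ k ≤ m * Real.exp (-(r / n)) ^ k := by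
        gcongr
        · rw [sub_nonneg, div_le_one hn]; exact hrn
        · linarith [Real.add_one_le_exp (-(r / n))]
    _ = m * Real.exp (-(k * (r / n))) := by rw [← Real.exp_nat_mul, mul_neg]
    _ < m * Real.exp (-Real.log m) := by gcongr
    _ = 1 := by rw [Real.exp_neg, Real.exp_log hm', mul_inv_cancel₀ hm'.ne']

section HittingSet

variable {ι V : Type*} [Fintype V] [Nonempty V]

theorem exists_mul_card_le_card_filter_mem [DecidableEq V] (A : ι → Finset V) {r : ℕ}
    (hA : ∀ i, r ≤ #(A i)) (F : Finset ι) :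
    ∃ x : V, r * #F ≤ Fintype.card V * #{i ∈ F | x ∈ A i} := by
  have hcount : r * #F ≤ ∑ x, #{i ∈ F | x ∈ A i} := calc
    r * #F ≤ ∑ i ∈ F, #(A i) := by
      rw [mul_comm, ← smul_eq_mul]
      exact card_nsmul_le_sum F _ r fun i _ => hA i
    _ = ∑ x, #{i ∈ F | x ∈ A i} := by
      simp only [card_eq_sum_ones, sum_filter]
      rw [sum_comm]
      simp
  obtain ⟨x, -, hx⟩ := exists_le_of_sum_le (s := univ) univ_nonempty
    (f := fun _ => r * #F) (g := fun x => Fintype.card V * #{i ∈ F | x ∈ A i})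
    (by simpa [← mul_sum] using Nat.mul_le_mul_left (Fintype.card V) hcount)
  exact ⟨x, hx⟩

theorem exists_hitting_finset_of_mul_pow_lt_one (A : ι → Finset V) {r : ℕ}
    (hA : ∀ i, r ≤ #(A i)) (hrn : r ≤ Fintype.card V) (k : ℕ) (F : Finset ι)
    (hF : #F * (1 - r / Fintype.card V : ℝ) ^ k < 1) :
    ∃ S : Finset V, #S ≤ k ∧ ∀ i ∈ F, ∃ s ∈ S, s ∈ A i := by
  classical
  induction k generalizing F with
  | zero =>
    have hF0 : F = ∅ :=
      card_eq_zero.mp <| Nat.lt_one_iff.mp <| by exact_mod_cast (by simpa using hF)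
    exact ⟨∅, le_rfl, by simp [hF0]⟩
  | succ k ih =>
    set n := Fintype.card V
    have hn : (0 : ℝ) < n := by exact_mod_cast Fintype.card_pos
    have hq : (0 : ℝ) ≤ 1 - r / n := by
      rw [sub_nonneg, div_le_one hn]
      exact_mod_cast hrn
    obtain ⟨x, hx⟩ := exists_mul_card_le_card_filter_mem A hA F
    set F' := {i ∈ F | x ∉ A i}
    have hF' : (#F' : ℝ) ≤ #F * (1 - r / n) := by
      have hsplit : (#F' : ℝ) = #F - #{i ∈ F | x ∈ A i} := by
        rw [← card_filter_add_card_filter_not (s := F) (fun i => x ∈ A i)]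
        push_cast
        ring
      have hhit : (r / n : ℝ) * #F ≤ #{i ∈ F | x ∈ A i} := by
        rw [div_mul_eq_mul_div, div_le_iff₀ hn, mul_comm _ (n : ℝ)]
        exact_mod_cast hx
      rw [hsplit, mul_one_sub]
      linarith
    obtain ⟨S, hS, hitS⟩ := ih F' <| calc
      (#F' : ℝ) * (1 - r / n) ^ k ≤ #F * (1 - r / n) * (1 - r / n) ^ k := by gcongr
      _ = #F * (1 - r / n) ^ (k + 1) := by ring
      _ < 1 := hF
    refine ⟨insert x S, (card_insert_le x S).trans (by omega), fun i hi => ?_⟩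
    by_cases hxi : x ∈ A i
    · exact ⟨x, mem_insert_self x S, hxi⟩
    · obtain ⟨s, hs, hsi⟩ := hitS i (mem_filter.mpr ⟨hi, hxi⟩)
      exact ⟨s, mem_insert_of_mem hs, hsi⟩

theorem exists_hitting_finset_card_le [Fintype ι] (A : ι → Finset V) {r : ℕ} (hr : 0 < r)
    (hrn : r ≤ Fintype.card V) (hA : ∀ i, r ≤ #(A i)) :
    ∃ S : Finset V, (#S : ℝ) ≤ Fintype.card V / r * Real.log (Fintype.card ι) + 1 ∧
      ∀ i, ∃ s ∈ S, s ∈ A i := by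
  set x : ℝ := Fintype.card V / r * Real.log (Fintype.card ι)
  have hx : 0 ≤ x := by have := Real.log_natCast_nonneg (Fintype.card ι); positivity
  obtain ⟨S, hS, hitS⟩ := exists_hitting_finset_of_mul_pow_lt_one A hA hrn (⌊x⌋₊ + 1) univ <| by
    rw [card_univ]
    exact natCast_mul_one_sub_div_pow_lt_one _ (by exact_mod_cast hr) (by exact_mod_cast hrn)
      (by exact_mod_cast Nat.lt_floor_add_one x)
  refine ⟨S, ?_, fun i => hitS i (mem_univ i)⟩
  calc (#S : ℝ) ≤ ⌊x⌋₊ + 1 := by exact_mod_cast hS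
    _ ≤ x + 1 := by gcongr; exact Nat.floor_le hx

end HittingSet

theorem gdistS_le_gdist {V : Type*} (G : SimpleGraph V) (w : Sym2 V → ℝ) {S : Set V}
    (hS : S.Finite) {v s : V} (hs : s ∈ S) : gdistS G w v S ≤ gdist G w v s :=
  csInf_le ((hS.image (gdist G w v)).bddBelow.mono <| by
    rintro _ ⟨s, hs, rfl⟩; exact ⟨s, hs, rfl⟩) ⟨s, hs, rfl⟩

theorem stmt14_general {V : Type*} [Fintype V] (G : SimpleGraph V)
    (w : Sym2 V → ℝ)
    (r : ℕ) (hr1 : 1 ≤ r) (hrn : r ≤ Fintype.card V) :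
    ∃ S : Finset V, S.Nonempty ∧
      (S.card : ℝ) ≤ ((Fintype.card V : ℝ) / r) * Real.log (Fintype.card V) + 1 ∧
      ∀ v : V, Set.ncard {u : V | gdist G w v u < gdistS G w v ↑S} ≤ r := by
  have hV : Nonempty V := Fintype.card_pos_iff.mp (by omega)
  obtain ⟨S, hS, hitS⟩ := exists_hitting_finset_card_le (fun v => nearSet (gdist G w v) r)
    hr1 hrn fun v => le_card_nearSet _ hrn
  obtain ⟨v₀⟩ := hV
  refine ⟨S, (hitS v₀).imp fun s h => h.1, hS, fun v => ?_⟩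
  obtain ⟨s, hsS, hs⟩ := hitS v
  exact (ncard_setOf_lt_lt_of_mem_nearSet hs (gdistS_le_gdist G w S.finite_toSet hsS)).le

/-- Let `G` be a connected finite simple graph on `n ≥ 2` vertices with nonnegative edge
weights, and let `1 ≤ r ≤ n`. Then there exists a nonempty set `S` of at most
`(n / r) · ln n + 1` vertices such that for every vertex `v`, the open ball
`B_S(v) = { u : dist_G(v, u) < dist_G(v, S) }` has at most `r` elements. -/
theorem stmt14 {V : Type*} [Fintype V] [DecidableEq V] (G : SimpleGraph V)
    (hG : G.Connected) (w : Sym2 V → ℝ) (hw : ∀ e ∈ G.edgeSet, 0 ≤ w e)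
    (hn : 2 ≤ Fintype.card V) (r : ℕ) (hr1 : 1 ≤ r) (hrn : r ≤ Fintype.card V) :
    ∃ S : Finset V, S.Nonempty ∧
      (S.card : ℝ) ≤ ((Fintype.card V : ℝ) / r) * Real.log (Fintype.card V) + 1 ∧
      ∀ v : V, Set.ncard {u : V | gdist G w v u < gdistS G w v ↑S} ≤ r :=
  stmt14_general G w r hr1 hrn
end
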